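/- Let Z be a nonnegative real-valued random variable with mean μ satisfying E[(Z − μ)²] ≤ B b² for some constants B, b > 0. Then for every 0 ≤ λ ≤ 1/b, E[exp(−λZ)] ≤ exp(−λμ) + B(λb)². -/

import Mathlib

/-!
Since `(exp (-x))'' = exp (-x) ≤ 1` on `[0, ∞)`, the function `x ↦ x ^ 2 / 2 - exp (-x)` is convex
there and lies above its tangent at `c = λ μ`; this is the second-order Taylor bound
`exp (-x) ≤ exp (-c) - exp (-c) (x - c) + (x - c) ^ 2 / 2`. Putting `x = λ Z` and integrating
kills the linear term, leaving `exp (-λ μ) + λ ^ 2 E[(Z - μ) ^ 2] / 2 ≤ exp (-λ μ) + B (λ b) ^ 2`.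
-/

open MeasureTheory Real

theorem ConvexOn.add_mul_sub_le_of_hasDerivAt {S : Set ℝ} {f : ℝ → ℝ} {f' x y : ℝ}
    (hf : ConvexOn ℝ S f) (hx : x ∈ S) (hy : y ∈ S) (hfx : HasDerivAt f f' x) :
    f x + f' * (y - x) ≤ f y := by
  rcases lt_trichotomy x y with hxy | rfl | hyx
  · have := hf.le_slope_of_hasDerivAt hx hy hxy hfx
    rw [slope_def_field, le_div_iff₀ (sub_pos.2 hxy)] at this
    linarith
  · simp
  · have := hf.slope_le_of_hasDerivAt hy hx hyx hfx
    rw [slope_def_field, div_le_iff₀ (sub_pos.2 hyx)] at this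
    linarith

theorem hasDerivAt_sq_div_two_sub_exp_neg (x : ℝ) :
    HasDerivAt (fun x : ℝ => x ^ 2 / 2 - exp (-x)) (x + exp (-x)) x :=
  (((hasDerivAt_pow 2 x).div_const 2).fun_sub (hasDerivAt_neg x).exp).congr_deriv (by ring)

theorem convexOn_sq_div_two_sub_exp_neg :
    ConvexOn ℝ (Set.Ici 0) (fun x : ℝ => x ^ 2 / 2 - exp (-x)) := by
  refine convexOn_of_hasDerivWithinAt2_nonneg (convex_Ici 0) (f' := fun x => x + exp (-x))
    (f'' := fun x => 1 - exp (-x)) (by fun_prop)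
    (fun x _ => (hasDerivAt_sq_div_two_sub_exp_neg x).hasDerivWithinAt)
    (fun x _ => ((hasDerivAt_id x).fun_add (hasDerivAt_neg x).exp).hasDerivWithinAt.congr_deriv
      (by ring)) (fun x hx => ?_)
  rw [interior_Ici] at hx
  simpa using (Set.mem_Ioi.1 hx).le

theorem exp_neg_le_taylor {c x : ℝ} (hc : 0 ≤ c) (hx : 0 ≤ x) :
    exp (-x) ≤ exp (-c) - exp (-c) * (x - c) + (x - c) ^ 2 / 2 := by
  have := convexOn_sq_div_two_sub_exp_neg.add_mul_sub_le_of_hasDerivAt hc hx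
    (hasDerivAt_sq_div_two_sub_exp_neg c)
  linarith

open scoped ProbabilityTheory in
theorem integral_exp_neg_mul_le {Ω : Type*} [MeasurableSpace Ω] {P : Measure Ω}
    [IsProbabilityMeasure P] {X : Ω → ℝ} (hX : 0 ≤ᵐ[P] X) (hXint : Integrable X P)
    (hXsq : Integrable (fun ω => (X ω - P[X]) ^ 2) P) {t : ℝ} (ht : 0 ≤ t) :
    ∫ ω, exp (-t * X ω) ∂P ≤ exp (-t * P[X]) + t ^ 2 * (∫ ω, (X ω - P[X]) ^ 2 ∂P) / 2 := by
  set m := P[X]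
  have hm : 0 ≤ m := integral_nonneg_of_ae hX
  have hcentered : Integrable (fun ω => X ω - m) P := hXint.sub (integrable_const m)
  have hexp : Integrable (fun ω => exp (-t * X ω)) P := by
    refine .of_bound (continuous_exp.comp_aestronglyMeasurable (hXint.1.const_mul (-t))) 1 ?_
    filter_upwards [hX] with ω hω
    simpa [abs_of_pos (exp_pos _)] using mul_nonneg ht hω
  have hlinear : Integrable (fun ω => exp (-t * m) - exp (-t * m) * t * (X ω - m)) P :=
    (integrable_const _).sub' (hcentered.const_mul _)
  have hquadratic : Integrable (fun ω => t ^ 2 * (X ω - m) ^ 2 / 2) P :=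
    (hXsq.const_mul _).div_const 2
  calc ∫ ω, exp (-t * X ω) ∂P
      ≤ ∫ ω, (exp (-t * m) - exp (-t * m) * t * (X ω - m) + t ^ 2 * (X ω - m) ^ 2 / 2) ∂P := by
        refine integral_mono_ae hexp (hlinear.fun_add hquadratic) ?_
        filter_upwards [hX] with ω hω
        have := exp_neg_le_taylor (mul_nonneg ht hm) (mul_nonneg ht hω)
        simp only [neg_mul] at this ⊢
        linarith
    _ = exp (-t * m) + t ^ 2 * (∫ ω, (X ω - m) ^ 2 ∂P) / 2 := by
        rw [integral_add hlinear hquadratic,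
          integral_sub (integrable_const _) (hcentered.const_mul _), integral_const_mul,
          integral_sub hXint (integrable_const m), integral_div, integral_const_mul]
        simp [m]

theorem stmt3_general
    {Ω : Type*} [MeasurableSpace Ω] (ℙ : Measure Ω) [IsProbabilityMeasure ℙ]
    (Z : Ω → ℝ) (hZnonneg : ∀ᵐ ω ∂ℙ, 0 ≤ Z ω)
    (hZint : Integrable Z ℙ)
    (μ : ℝ) (hμ : μ = ∫ ω, Z ω ∂ℙ)
    (hZsq : Integrable (fun ω => (Z ω - μ) ^ 2) ℙ)
    (B b : ℝ)
    (hvar : ∫ ω, (Z ω - μ) ^ 2 ∂ℙ ≤ B * b ^ 2)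
    (lam : ℝ) (hlam0 : 0 ≤ lam) :
    ∫ ω, Real.exp (-lam * Z ω) ∂ℙ ≤ Real.exp (-lam * μ) + B * (lam * b) ^ 2 := by
  have hbound := integral_exp_neg_mul_le hZnonneg hZint (hμ ▸ hZsq) hlam0
  rw [← hμ] at hbound
  have hvar_nonneg : 0 ≤ ∫ ω, (Z ω - μ) ^ 2 ∂ℙ := integral_nonneg fun ω => sq_nonneg _
  nlinarith [sq_nonneg lam]

/-- Let `Z` be a nonnegative real-valued random variable with mean `μ`
satisfying `E[(Z − μ)²] ≤ B b²` for constants `B, b > 0`.  Then for every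
`0 ≤ λ ≤ 1/b`, `E[exp(−λ Z)] ≤ exp(−λ μ) + B (λ b)²`. -/
theorem stmt3
    {Ω : Type*} [MeasurableSpace Ω] (ℙ : Measure Ω) [IsProbabilityMeasure ℙ]
    (Z : Ω → ℝ) (hZmeas : Measurable Z) (hZnonneg : ∀ᵐ ω ∂ℙ, 0 ≤ Z ω)
    (hZint : Integrable Z ℙ)
    (μ : ℝ) (hμ : μ = ∫ ω, Z ω ∂ℙ)
    (hZsq : Integrable (fun ω => (Z ω - μ) ^ 2) ℙ)
    (B b : ℝ) (hB : 0 < B) (hb : 0 < b)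
    (hvar : ∫ ω, (Z ω - μ) ^ 2 ∂ℙ ≤ B * b ^ 2)
    (lam : ℝ) (hlam0 : 0 ≤ lam) (hlam1 : lam ≤ 1 / b) :
    ∫ ω, Real.exp (-lam * Z ω) ∂ℙ ≤ Real.exp (-lam * μ) + B * (lam * b) ^ 2 :=
  stmt3_general ℙ Z hZnonneg hZint μ hμ hZsq B b hvar lam hlam0
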